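/- arXiv:1805.11652 — 5 statements merged into one kernel-verified Lean document; each statement's English description precedes it below -/
import Mathlib

section
/- For classical probability distributions: let P be a probability distribution and Q a (not necessarily normalized) nonnegative function on a finite set with supp(P) ⊆ supp(Q). Define the divergence variance V(P‖Q) = Σ_x P(x)(log(P(x)/Q(x)) − D(P‖Q))², where D(P‖Q) = Σ_x P(x) log(P(x)/Q(x)). Then for any ν ∈ (0,1), V(P‖Q) ≤ (1/ν²)·log²(2^{−ν D(P‖Q) + ν D_{1+ν}(P‖Q)} + 2^{ν D(P‖Q) − ν D_{1−ν}(P‖Q)} + 1), where D_α(P‖Q) = (1/(α−1)) log Σ_x P(x)^α Q(x)^{1−α}. -/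
/-! Let `L = log (P/Q) - D`, a random variable under `P`. Since
`2^|t| ≤ 2^t + 2^(-t) + 1`, we have `t² ≤ log² (2^t + 2^(-t) + 1)`; apply this to `t = ν L`.
The function `log²` is concave on `[e, ∞)`, which contains `2^t + 2^(-t) + 1 ≥ 3`, so Jensen's
inequality gives `ν² V ≤ log² (E 2^(ν L) + E 2^(-ν L) + 1)`, and the two expectations are the
exponentials of Rényi divergences appearing in the bound. -/

open Finset Real

theorem concaveOn_sq_log : ConcaveOn ℝ (Set.Ici (exp 1)) (fun s => log s ^ 2) := by
  have hpos : ∀ x ∈ Set.Ici (exp 1), 0 < x := fun x hx => (exp_pos 1).trans_le hx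
  refine concaveOn_of_hasDerivWithinAt2_nonpos (convex_Ici _)
    (f' := fun s => 2 * log s * s⁻¹) (f'' := fun s => 2 * (1 - log s) / s ^ 2) ?_ ?_ ?_ ?_
  · exact fun x hx => ((continuousAt_log (hpos x hx).ne').continuousWithinAt).pow 2
  · intro x hx
    have hx0 := (hpos x (interior_subset hx)).ne'
    exact ((hasDerivAt_log hx0).fun_pow 2).hasDerivWithinAt.congr_deriv (by ring)
  · intro x hx
    have hx0 := (hpos x (interior_subset hx)).ne'
    exact (((hasDerivAt_log hx0).const_mul 2).mul (hasDerivAt_inv hx0)).hasDerivWithinAt.congr_deriv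
      (by field_simp; ring)
  · intro x hx
    have hx1 : 1 ≤ log x := (le_log_iff_exp_le (hpos x (interior_subset hx))).2 (interior_subset hx)
    exact div_nonpos_of_nonpos_of_nonneg (by linarith) (sq_nonneg x)

theorem concaveOn_sq_logb (b : ℝ) : ConcaveOn ℝ (Set.Ici (exp 1)) (fun s => logb b s ^ 2) := by
  have : (fun s => logb b s ^ 2) = fun s => (log b)⁻¹ ^ 2 • log s ^ 2 := by
    funext s; rw [logb, smul_eq_mul, div_eq_inv_mul, mul_pow]
  rw [this]
  exact concaveOn_sq_log.smul (sq_nonneg _)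

theorem three_le_rpow_add_rpow_neg_add_one {b : ℝ} (hb : 0 < b) (t : ℝ) :
    3 ≤ b ^ t + b ^ (-t) + 1 := by
  have hy : 0 < b ^ t := rpow_pos_of_pos hb t
  rw [rpow_neg hb.le]
  nlinarith [sq_nonneg (b ^ t - 1), mul_inv_cancel₀ hy.ne']

theorem sq_le_sq_logb_rpow_add_rpow_neg_add_one {b : ℝ} (hb : 1 < b) (t : ℝ) :
    t ^ 2 ≤ logb b (b ^ t + b ^ (-t) + 1) ^ 2 := by
  have hpos := rpow_pos_of_pos (zero_lt_one.trans hb)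
  have habs : |t| ≤ logb b (b ^ t + b ^ (-t) + 1) := by
    rw [le_logb_iff_rpow_le hb (by linarith [hpos t, hpos (-t)])]
    rcases abs_cases t with ⟨h, _⟩ | ⟨h, _⟩ <;> rw [h] <;> linarith [hpos t, hpos (-t)]
  rw [← sq_abs t]
  exact pow_le_pow_left₀ (abs_nonneg t) habs 2

theorem sum_mul_sq_le_sq_logb_sum {ι : Type*} [Fintype ι] {b : ℝ} (hb : 1 < b) (w t : ι → ℝ)
    (hw0 : ∀ i, 0 ≤ w i) (hw1 : ∑ i, w i = 1) :
    ∑ i, w i * t i ^ 2 ≤ logb b (∑ i, w i * b ^ t i + ∑ i, w i * b ^ (-t i) + 1) ^ 2 := by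
  set S : ι → ℝ := fun i => b ^ t i + b ^ (-t i) + 1
  have hS : ∀ i ∈ univ, S i ∈ Set.Ici (exp 1) := fun i _ =>
    exp_one_lt_three.le.trans (three_le_rpow_add_rpow_neg_add_one (zero_lt_one.trans hb) (t i))
  have hmean : ∑ i, w i * S i = ∑ i, w i * b ^ t i + ∑ i, w i * b ^ (-t i) + 1 := by
    simp only [S, mul_add, mul_one, sum_add_distrib, hw1]
  calc ∑ i, w i * t i ^ 2 ≤ ∑ i, w i * logb b (S i) ^ 2 :=
        sum_le_sum fun i _ =>
          mul_le_mul_of_nonneg_left (sq_le_sq_logb_rpow_add_rpow_neg_add_one hb (t i)) (hw0 i)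
    _ ≤ logb b (∑ i, w i * S i) ^ 2 :=
        (concaveOn_sq_logb b).le_map_sum (fun i _ => hw0 i) hw1 hS
    _ = _ := by rw [hmean]

noncomputable def renyiDiv {X : Type*} [Fintype X] (P Q : X → ℝ) (α : ℝ) : ℝ :=
  1 / (α - 1) * logb 2 (∑ x, P x ^ α * Q x ^ (1 - α))

section
variable {X : Type*} [Fintype X] {P Q : X → ℝ}

theorem rpow_mul_rpow_eq_mul_rpow_mul_logb {b p q α : ℝ} (hb : 0 < b) (hb1 : b ≠ 1)
    (hp : 0 < p) (hq : 0 < q) :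
    p ^ α * q ^ (1 - α) = p * b ^ ((α - 1) * logb b (p / q)) := by
  rw [mul_comm (α - 1), rpow_mul hb.le, rpow_logb hb hb1 (div_pos hp hq),
    div_rpow hp.le hq.le, rpow_sub_one hp.ne', show 1 - α = -(α - 1) by ring,
    rpow_neg hq.le, rpow_sub_one hq.ne']
  field_simp

theorem sum_rpow_mul_rpow_eq_sum_mul_rpow {α : ℝ} (hα : α ≠ 0)
    (hP0 : ∀ x, 0 ≤ P x) (hsupp : ∀ x, 0 < P x → 0 < Q x) :
    ∑ x, P x ^ α * Q x ^ (1 - α) = ∑ x, P x * 2 ^ ((α - 1) * logb 2 (P x / Q x)) := by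
  refine sum_congr rfl fun x _ => ?_
  rcases (hP0 x).eq_or_lt with hp | hp
  · rw [← hp, zero_rpow hα, zero_mul, zero_mul]
  · exact rpow_mul_rpow_eq_mul_rpow_mul_logb two_pos (by norm_num) hp (hsupp x hp)

theorem rpow_mul_sub_renyiDiv {α : ℝ} (hα0 : α ≠ 0) (hα1 : α ≠ 1)
    (hP0 : ∀ x, 0 ≤ P x) (hP : ∃ x, 0 < P x) (hsupp : ∀ x, 0 < P x → 0 < Q x) (D : ℝ) :
    (2 : ℝ) ^ ((α - 1) * (renyiDiv P Q α - D))
      = ∑ x, P x * 2 ^ ((α - 1) * (logb 2 (P x / Q x) - D)) := by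
  obtain ⟨x₀, hx₀⟩ := hP
  have hsum : 0 < ∑ x, P x * (2 : ℝ) ^ ((α - 1) * logb 2 (P x / Q x)) :=
    sum_pos' (fun x _ => mul_nonneg (hP0 x) (rpow_pos_of_pos two_pos _).le)
      ⟨x₀, mem_univ _, mul_pos hx₀ (rpow_pos_of_pos two_pos _)⟩
  have hexp : (α - 1) * renyiDiv P Q α = logb 2 (∑ x, P x * 2 ^ ((α - 1) * logb 2 (P x / Q x))) := by
    rw [renyiDiv, sum_rpow_mul_rpow_eq_sum_mul_rpow hα0 hP0 hsupp, ← mul_assoc,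
      mul_one_div_cancel (sub_ne_zero.2 hα1), one_mul]
  simp only [mul_sub, rpow_sub two_pos, hexp, rpow_logb two_pos (by norm_num : (2:ℝ) ≠ 1) hsum,
    sum_div, mul_div_assoc]

end

theorem stmt0_general {X : Type*} [Fintype X] (P Q : X → ℝ)
    (hP0 : ∀ x, 0 ≤ P x) (hP1 : ∑ x, P x = 1)
    (hsupp : ∀ x, 0 < P x → 0 < Q x)
    (ν : ℝ) (hν : ν ∈ Set.Ioo (0:ℝ) 1)
    (D : ℝ)
    (V : ℝ) (hV : V = ∑ x, P x * (Real.logb 2 (P x / Q x) - D)^2)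
    (Dα : ℝ → ℝ)
    (hDα : ∀ α : ℝ, Dα α =
      (1/(α-1)) * Real.logb 2 (∑ x, Real.rpow (P x) α * Real.rpow (Q x) (1-α))) :
    V ≤ (1/ν^2) *
      (Real.logb 2 ((2:ℝ) ^ (-ν * D + ν * Dα (1+ν))
        + (2:ℝ) ^ (ν * D - ν * Dα (1-ν)) + 1))^2 := by
  obtain ⟨hν0, hν1⟩ := hν
  have hDα' : Dα = renyiDiv P Q := funext hDα
  obtain ⟨x₀, -, hx₀⟩ := exists_lt_of_sum_lt (by simp [hP1] : ∑ x : X, (0 : ℝ) < ∑ x, P x)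
  set L : X → ℝ := fun x => logb 2 (P x / Q x) - D
  have hplus : (2 : ℝ) ^ (-ν * D + ν * Dα (1 + ν)) = ∑ x, P x * 2 ^ (ν * L x) := by
    have h := rpow_mul_sub_renyiDiv (α := 1 + ν) (by linarith) (by linarith) hP0 ⟨x₀, hx₀⟩ hsupp D
    rw [add_sub_cancel_left] at h
    rw [hDα', ← h]
    ring_nf
  have hminus : (2 : ℝ) ^ (ν * D - ν * Dα (1 - ν)) = ∑ x, P x * 2 ^ (-(ν * L x)) := by
    have h := rpow_mul_sub_renyiDiv (α := 1 - ν) (by linarith) (by linarith) hP0 ⟨x₀, hx₀⟩ hsupp D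
    rw [sub_sub_cancel_left] at h
    simp only [neg_mul] at h
    rw [hDα', ← h]
    ring_nf
  have hvar : ν ^ 2 * V = ∑ x, P x * (ν * L x) ^ 2 := by
    rw [hV, mul_sum]
    exact sum_congr rfl fun x _ => by ring
  have hjensen := sum_mul_sq_le_sq_logb_sum one_lt_two P (fun x => ν * L x) hP0 hP1
  rw [← hvar, ← hplus, ← hminus] at hjensen
  rw [one_div, inv_mul_eq_div, le_div_iff₀ (by positivity)]
  linarith

/-- Divergence variance bound via Rényi divergences, classical case. -/
theorem stmt0 {X : Type*} [Fintype X] (P Q : X → ℝ)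
    (hP0 : ∀ x, 0 ≤ P x) (hP1 : ∑ x, P x = 1)
    (hQ0 : ∀ x, 0 ≤ Q x) (hsupp : ∀ x, 0 < P x → 0 < Q x)
    (ν : ℝ) (hν : ν ∈ Set.Ioo (0:ℝ) 1)
    (D : ℝ) (hD : D = ∑ x, P x * Real.logb 2 (P x / Q x))
    (V : ℝ) (hV : V = ∑ x, P x * (Real.logb 2 (P x / Q x) - D)^2)
    (Dα : ℝ → ℝ)
    (hDα : ∀ α : ℝ, Dα α =
      (1/(α-1)) * Real.logb 2 (∑ x, Real.rpow (P x) α * Real.rpow (Q x) (1-α))) :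
    V ≤ (1/ν^2) *
      (Real.logb 2 ((2:ℝ) ^ (-ν * D + ν * Dα (1+ν))
        + (2:ℝ) ^ (ν * D - ν * Dα (1-ν)) + 1))^2 :=
  stmt0_general P Q hP0 hP1 hsupp ν hν D V hV Dα hDα
end

section
/- Explicit Taylor-type continuity bound for classical Rényi divergence: let P be a probability distribution and Q a nonnegative function on a finite set with supp(P) ⊆ supp(Q). For any α > 1 and μ ∈ (0,1), D_α(P‖Q) ≤ D(P‖Q) + ((α−1)·ln 2 / 2)·V(P‖Q) + (α−1)²·K(α,μ), where K(α,μ) = (1/(6μ³ ln 2))·2^{(α−1)(D_α(P‖Q) − D(P‖Q))}·ln³(2^{(α+μ−1)(D_{α+μ}(P‖Q) − D(P‖Q))} + e²). -/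
/-!
Write `y` for the log-likelihood ratio `log (P / Q)` centred at its `P`-mean and `t = α - 1`.
Then `t · ln 2 · (D_α - D) = log E[e^{ty}] ≤ E[e^{ty}] - 1 = E[e^{ty} - 1 - ty]`, and
`e^x ≤ 1 + x + x²/2 + (x³/6) e^x` bounds this by `t²/2 · E[y²] + t³/(6μ³) · E[(μy)³ e^{ty}]`.

For the cubic moment, `z³ ≤ L³ - 3L² + 3L² e^{-L} (e² + e^z)` for every real `z` and `L ≥ 2`:
as a function of `L` the right-hand side is minimal at `L = log (e² + e^z) ≥ z`, where it equals
`L³`. Averaging against `e^{ty}` with the averaged minimiser `L = log (E[e^{(t+μ)y}] + e²)` gives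
`E[(μy)³ e^{ty}] ≤ L³ · E[e^{ty}]`, since `E[e^{ty}] ≥ 1`.
-/

open Finset Real

theorem isMinOn_Ici_of_hasDerivAt {f f' : ℝ → ℝ} {a c : ℝ}
    (hf : ∀ y, HasDerivAt f (f' y) y) (hleft : ∀ y ∈ Set.Ioo c a, f' y ≤ 0)
    (hright : ∀ y ∈ Set.Ioi a, 0 ≤ f' y) : IsMinOn f (Set.Ici c) a := by
  intro x (hx : c ≤ x)
  have hcont : ∀ s, ContinuousOn f s := fun s y _ => (hf y).continuousAt.continuousWithinAt
  rcases le_total x a with hxa | hax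
  · have hanti : AntitoneOn f (Set.Icc c a) :=
      antitoneOn_of_hasDerivWithinAt_nonpos (convex_Icc c a) (hcont _)
        (fun y _ => (hf y).hasDerivWithinAt) (by rwa [interior_Icc])
    exact hanti ⟨hx, hxa⟩ ⟨hx.trans hxa, le_rfl⟩ hxa
  · have hmono : MonotoneOn f (Set.Ici a) :=
      monotoneOn_of_hasDerivWithinAt_nonneg (convex_Ici a) (hcont _)
        (fun y _ => (hf y).hasDerivWithinAt) (by rwa [interior_Ici])
    exact hmono Set.self_mem_Ici hax hax

theorem exp_le_quadratic_add_cube_mul_exp (x : ℝ) :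
    exp x ≤ 1 + x + x ^ 2 / 2 + x ^ 3 / 6 * exp x := by
  have hderiv : ∀ y, HasDerivAt (fun y => y ^ 3 / 6 + exp (-y) * (1 + y + y ^ 2 / 2))
      (y ^ 2 / 2 * (1 - exp (-y))) y := by
    intro y
    have := ((hasDerivAt_pow 3 y).div_const 6).add
      ((hasDerivAt_neg y).exp.mul (((hasDerivAt_const y 1).add (hasDerivAt_id y)).add
        ((hasDerivAt_pow 2 y).div_const 2)))
    refine this.congr_deriv ?_
    simp only [Pi.add_apply, id, Nat.cast_ofNat]
    ring
  have hmin := isMinOn_Ici_of_hasDerivAt (c := x) (a := 0) hderiv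
    (fun y hy => mul_nonpos_of_nonneg_of_nonpos (by positivity)
      (by simp only [sub_nonpos, one_le_exp_iff]; linarith [hy.2]))
    (fun y hy => mul_nonneg (by positivity)
      (by simp only [sub_nonneg, exp_le_one_iff]; linarith [hy.out]))
    Set.self_mem_Ici
  have h := mul_le_mul_of_nonneg_left hmin (exp_pos x).le
  calc exp x = exp x * (0 ^ 3 / 6 + exp (-0) * (1 + 0 + 0 ^ 2 / 2)) := by simp
    _ ≤ exp x * (x ^ 3 / 6 + exp (-x) * (1 + x + x ^ 2 / 2)) := h
    _ = _ := by rw [mul_add, ← mul_assoc, ← exp_add, add_neg_cancel, exp_zero]; ring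

theorem log_pow_three_le {w L : ℝ} (hw : exp 2 ≤ w) (hL : 2 ≤ L) :
    log w ^ 3 ≤ L ^ 3 - 3 * L ^ 2 + 3 * w * L ^ 2 * exp (-L) := by
  have hw0 : 0 < w := (exp_pos 2).trans_le hw
  have hlog : 2 ≤ log w := by rwa [le_log_iff_exp_le hw0]
  have hderiv : ∀ y, HasDerivAt (fun y => y ^ 3 - 3 * y ^ 2 + 3 * w * y ^ 2 * exp (-y))
      (3 * y * (y - 2) * (1 - w * exp (-y))) y := by
    intro y
    have := (((hasDerivAt_pow 3 y).sub ((hasDerivAt_pow 2 y).const_mul 3)).add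
      (((hasDerivAt_pow 2 y).const_mul (3 * w)).mul (hasDerivAt_neg y).exp))
    refine this.congr_deriv ?_
    simp only [Nat.cast_ofNat]
    ring
  have hmin := isMinOn_Ici_of_hasDerivAt (c := 2) (a := log w) hderiv
    (fun y hy => by
      have : 1 ≤ w * exp (-y) := by
        rw [exp_neg, ← div_eq_mul_inv, one_le_div (exp_pos y)]
        exact ((lt_log_iff_exp_lt hw0).1 hy.2).le
      have : 0 ≤ 3 * y * (y - 2) := by nlinarith [hy.1]
      nlinarith)
    (fun y hy => by
      have hy : log w < y := hy
      have : w * exp (-y) ≤ 1 := by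
        rw [exp_neg, ← div_eq_mul_inv, div_le_one (exp_pos y)]
        exact ((log_lt_iff_lt_exp hw0).1 hy).le
      have : 0 ≤ 3 * y * (y - 2) := by nlinarith
      nlinarith)
    (show L ∈ Set.Ici 2 from hL)
  have hval : log w ^ 3 - 3 * log w ^ 2 + 3 * w * log w ^ 2 * exp (-log w) = log w ^ 3 := by
    rw [exp_neg, exp_log hw0]
    field_simp
    ring
  exact hval ▸ hmin

theorem pow_three_le_of_two_le (z : ℝ) {L : ℝ} (hL : 2 ≤ L) :
    z ^ 3 ≤ L ^ 3 - 3 * L ^ 2 + 3 * L ^ 2 * exp (-L) * (exp 2 + exp z) := by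
  have hw : 0 < exp 2 + exp z := by positivity
  have hz : z ≤ log (exp 2 + exp z) := by
    rw [le_log_iff_exp_le hw]
    linarith [exp_pos 2]
  calc z ^ 3 ≤ log (exp 2 + exp z) ^ 3 := (Odd.pow_le_pow (by decide)).2 hz
    _ ≤ _ := log_pow_three_le (by linarith [exp_pos z]) hL
    _ = _ := by ring

section WeightedSums

variable {ι : Type*} {s : Finset ι} {p y : ι → ℝ}

theorem one_le_sum_mul_exp (hp : ∀ i ∈ s, 0 ≤ p i) (hp1 : ∑ i ∈ s, p i = 1)
    (hy : ∑ i ∈ s, p i * y i = 0) (c : ℝ) : 1 ≤ ∑ i ∈ s, p i * exp (c * y i) :=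
  calc 1 = ∑ i ∈ s, p i * (c * y i + 1) := by
        simp only [mul_add, mul_one, sum_add_distrib, mul_left_comm _ c, ← mul_sum, hy, hp1]
        ring
    _ ≤ _ := sum_le_sum fun i hi => mul_le_mul_of_nonneg_left (add_one_le_exp _) (hp i hi)

theorem sum_mul_pow_three_mul_exp_le (hp : ∀ i ∈ s, 0 ≤ p i) (hp1 : ∑ i ∈ s, p i = 1)
    (hy : ∑ i ∈ s, p i * y i = 0) (t μ : ℝ) :
    ∑ i ∈ s, p i * ((μ * y i) ^ 3 * exp (t * y i)) ≤
      log (∑ i ∈ s, p i * exp ((t + μ) * y i) + exp 2) ^ 3 * ∑ i ∈ s, p i * exp (t * y i) := by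
  set G := ∑ i ∈ s, p i * exp (t * y i)
  set G' := ∑ i ∈ s, p i * exp ((t + μ) * y i)
  set L := log (G' + exp 2)
  have hG : 1 ≤ G := one_le_sum_mul_exp hp hp1 hy t
  have hG' : 1 ≤ G' := one_le_sum_mul_exp hp hp1 hy (t + μ)
  have hL : 2 ≤ L := by rw [le_log_iff_exp_le (by positivity)]; linarith
  have hexpL : exp (-L) * (exp 2 + G') = 1 := by
    rw [exp_neg, add_comm, exp_log (by positivity), inv_mul_cancel₀ (by positivity)]
  have hpoint : ∀ i ∈ s, p i * ((μ * y i) ^ 3 * exp (t * y i)) ≤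
      (L ^ 3 - 3 * L ^ 2) * (p i * exp (t * y i))
        + 3 * L ^ 2 * exp (-L) * (exp 2 * (p i * exp (t * y i)) + p i * exp ((t + μ) * y i)) := by
    intro i hi
    have h := mul_le_mul_of_nonneg_left (pow_three_le_of_two_le (μ * y i) hL)
      (mul_nonneg (hp i hi) (exp_pos (t * y i)).le)
    have hexp : exp (μ * y i) * exp (t * y i) = exp ((t + μ) * y i) := by
      rw [← exp_add]; ring_nf
    linear_combination h + 3 * L ^ 2 * exp (-L) * p i * hexp
  calc _ ≤ (L ^ 3 - 3 * L ^ 2) * G + 3 * L ^ 2 * (exp (-L) * (exp 2 * G + G')) := by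
        refine (sum_le_sum hpoint).trans_eq ?_
        simp only [sum_add_distrib, ← mul_sum, G, G']
        ring
    _ ≤ (L ^ 3 - 3 * L ^ 2) * G + 3 * L ^ 2 * (exp (-L) * (exp 2 + G') * G) := by
        have h : exp (-L) * (exp 2 * G + G') ≤ exp (-L) * (exp 2 + G') * G := by
          nlinarith [mul_nonneg (mul_nonneg (exp_pos (-L)).le (by linarith : (0:ℝ) ≤ G'))
            (by linarith : (0:ℝ) ≤ G - 1)]
        exact add_le_add_right (mul_le_mul_of_nonneg_left h (by positivity)) _
    _ = L ^ 3 * G := by rw [hexpL]; ring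

theorem log_sum_mul_exp_le (hp : ∀ i ∈ s, 0 ≤ p i) (hp1 : ∑ i ∈ s, p i = 1)
    (hy : ∑ i ∈ s, p i * y i = 0) {t μ : ℝ} (ht : 0 ≤ t) (hμ : 0 < μ) :
    log (∑ i ∈ s, p i * exp (t * y i)) ≤
      t ^ 2 / 2 * (∑ i ∈ s, p i * y i ^ 2)
        + t ^ 3 / (6 * μ ^ 3) * (∑ i ∈ s, p i * exp (t * y i))
          * log (∑ i ∈ s, p i * exp ((t + μ) * y i) + exp 2) ^ 3 := by
  have hG := one_le_sum_mul_exp hp hp1 hy t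
  calc _ ≤ ∑ i ∈ s, p i * exp (t * y i) - 1 := log_le_sub_one_of_pos (by linarith)
    _ = ∑ i ∈ s, p i * (exp (t * y i) - 1 - t * y i) := by
        simp only [mul_sub, mul_one, sum_sub_distrib, mul_left_comm _ t, ← mul_sum, hy, hp1]
        ring
    _ ≤ ∑ i ∈ s, p i * ((t * y i) ^ 2 / 2 + (t * y i) ^ 3 / 6 * exp (t * y i)) :=
        sum_le_sum fun i hi => mul_le_mul_of_nonneg_left
          (by linarith [exp_le_quadratic_add_cube_mul_exp (t * y i)]) (hp i hi)
    _ = t ^ 2 / 2 * (∑ i ∈ s, p i * y i ^ 2)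
          + t ^ 3 / (6 * μ ^ 3) * ∑ i ∈ s, p i * ((μ * y i) ^ 3 * exp (t * y i)) := by
        rw [mul_sum, mul_sum, ← sum_add_distrib]
        refine sum_congr rfl fun i _ => ?_
        field_simp
    _ ≤ _ := by
        rw [mul_assoc, mul_comm (∑ i ∈ s, _)]
        gcongr
        exact sum_mul_pow_three_mul_exp_le hp hp1 hy t μ

end WeightedSums

theorem rpow_mul_rpow_one_sub_eq {p q β : ℝ} (hp : 0 ≤ p) (hq : 0 < p → 0 < q) (hβ : β ≠ 0) :
    p ^ β * q ^ (1 - β) = p * exp ((β - 1) * log (p / q)) := by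
  rcases hp.eq_or_lt with rfl | hp
  · simp [zero_rpow hβ]
  have hq := hq hp
  calc p ^ β * q ^ (1 - β) = exp (log p) * exp ((β - 1) * (log p - log q)) := by
        rw [rpow_def_of_pos hp, rpow_def_of_pos hq, ← exp_add, ← exp_add]
        ring_nf
    _ = _ := by rw [exp_log hp, log_div hp.ne' hq.ne']

section Renyi

variable {X : Type*} [Fintype X] {P Q : X → ℝ}

noncomputable def centredLogRatio (P Q : X → ℝ) (x : X) : ℝ :=
  log (P x / Q x) - ∑ x', P x' * log (P x' / Q x')

theorem sum_mul_centredLogRatio (hP1 : ∑ x, P x = 1) :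
    ∑ x, P x * centredLogRatio P Q x = 0 := by
  simp only [centredLogRatio, mul_sub, sum_sub_distrib, ← sum_mul, hP1, one_mul, sub_self]

theorem sum_mul_logb_eq :
    ∑ x, P x * logb 2 (P x / Q x) = (∑ x, P x * log (P x / Q x)) / log 2 := by
  simp only [logb, mul_div_assoc, sum_div]

theorem sum_mul_centredLogRatio_sq :
    ∑ x, P x * centredLogRatio P Q x ^ 2 =
      log 2 ^ 2 * ∑ x, P x * (logb 2 (P x / Q x) - ∑ x', P x' * logb 2 (P x' / Q x')) ^ 2 := by
  have hlog2 : log 2 ≠ 0 := (log_pos one_lt_two).ne'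
  rw [sum_mul_logb_eq, mul_sum]
  refine sum_congr rfl fun x _ => ?_
  simp only [centredLogRatio, logb]
  field_simp

theorem log_two_mul_renyi_sub (hP0 : ∀ x, 0 ≤ P x) (hP1 : ∑ x, P x = 1)
    (hsupp : ∀ x, 0 < P x → 0 < Q x) {β : ℝ} (hβ0 : β ≠ 0) (hβ1 : β ≠ 1) :
    log 2 * ((β - 1) * (1 / (β - 1) * logb 2 (∑ x, P x ^ β * Q x ^ (1 - β))
        - ∑ x, P x * logb 2 (P x / Q x))) =
      log (∑ x, P x * exp ((β - 1) * centredLogRatio P Q x)) := by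
  have hlog2 : log 2 ≠ 0 := (log_pos one_lt_two).ne'
  have hβ1' : β - 1 ≠ 0 := sub_ne_zero.2 hβ1
  have hG := one_le_sum_mul_exp (s := univ) (fun x _ => hP0 x) hP1
    (sum_mul_centredLogRatio (Q := Q) hP1) (β - 1)
  have hsum : ∑ x, P x ^ β * Q x ^ (1 - β) =
      exp ((β - 1) * ∑ x, P x * log (P x / Q x)) *
        ∑ x, P x * exp ((β - 1) * centredLogRatio P Q x) := by
    rw [mul_sum]
    refine sum_congr rfl fun x _ => ?_
    rw [rpow_mul_rpow_one_sub_eq (hP0 x) (hsupp x) hβ0, mul_left_comm, ← exp_add,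
      centredLogRatio]
    ring_nf
  rw [hsum, sum_mul_logb_eq, logb, log_mul (exp_pos _).ne' (one_pos.trans_le hG).ne', log_exp]
  field_simp
  ring

end Renyi

theorem stmt7_general {X : Type*} [Fintype X] (P Q : X → ℝ)
    (hP0 : ∀ x, 0 ≤ P x) (hP1 : ∑ x, P x = 1)
    (hsupp : ∀ x, 0 < P x → 0 < Q x)
    (D : ℝ) (hD : D = ∑ x, P x * Real.logb 2 (P x / Q x))
    (V : ℝ) (hV : V = ∑ x, P x * (Real.logb 2 (P x / Q x) - D)^2)
    (Dα : ℝ → ℝ)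
    (hDα : ∀ α : ℝ, Dα α =
      (1/(α-1)) * Real.logb 2 (∑ x, Real.rpow (P x) α * Real.rpow (Q x) (1-α)))
    (α μ : ℝ) (hα : 1 < α) (hμ : μ ∈ Set.Ioo (0:ℝ) 1) :
    Dα α ≤ D + ((α-1) * Real.log 2 / 2) * V
      + (α-1)^2 * ((1/(6 * μ^3 * Real.log 2))
          * (2:ℝ) ^ ((α-1) * (Dα α - D))
          * (Real.log ((2:ℝ) ^ ((α+μ-1) * (Dα (α+μ) - D)) + Real.exp 2))^3) := by
  simp only [Real.rpow_eq_pow] at hDα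
  have hy := sum_mul_centredLogRatio (Q := Q) hP1
  have hgap : ∀ β, 1 < β → log 2 * ((β - 1) * (Dα β - D)) =
      log (∑ x, P x * exp ((β - 1) * centredLogRatio P Q x)) := fun β hβ => by
    rw [hDα, hD]
    exact log_two_mul_renyi_sub hP0 hP1 hsupp (by linarith) (by linarith)
  have hG : ∀ β, 1 < β → (2 : ℝ) ^ ((β - 1) * (Dα β - D)) =
      ∑ x, P x * exp ((β - 1) * centredLogRatio P Q x) := fun β hβ => by
    rw [rpow_def_of_pos two_pos, hgap β hβ,
      exp_log (one_pos.trans_le (one_le_sum_mul_exp (fun x _ => hP0 x) hP1 hy _))]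
  have hmain := log_sum_mul_exp_le (fun x _ => hP0 x) hP1 hy (t := α - 1) (by linarith) hμ.1
  rw [sum_mul_centredLogRatio_sq, ← hD, ← hV] at hmain
  rw [hG α hα, hG (α + μ) (by linarith [hμ.1]), show α + μ - 1 = α - 1 + μ by ring]
  have hpos : 0 < (α - 1) * log 2 := mul_pos (by linarith) (log_pos one_lt_two)
  refine le_of_mul_le_mul_left ?_ hpos
  set G := ∑ x, P x * exp ((α - 1) * centredLogRatio P Q x)
  set L := log (∑ x, P x * exp ((α - 1 + μ) * centredLogRatio P Q x) + exp 2)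
  have hμ0 := hμ.1.ne'
  have hlog2 := (log_pos one_lt_two).ne'
  calc (α - 1) * log 2 * Dα α = (α - 1) * log 2 * D + log G := by rw [← hgap α hα]; ring
    _ ≤ (α - 1) * log 2 * D +
          ((α - 1) ^ 2 / 2 * (log 2 ^ 2 * V) + (α - 1) ^ 3 / (6 * μ ^ 3) * G * L ^ 3) := by
        linarith
    _ = _ := by field_simp; ring

/-- Explicit Taylor-type continuity bound for the classical Rényi divergence. -/
theorem stmt7 {X : Type*} [Fintype X] (P Q : X → ℝ)
    (hP0 : ∀ x, 0 ≤ P x) (hP1 : ∑ x, P x = 1)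
    (hQ0 : ∀ x, 0 ≤ Q x) (hsupp : ∀ x, 0 < P x → 0 < Q x)
    (D : ℝ) (hD : D = ∑ x, P x * Real.logb 2 (P x / Q x))
    (V : ℝ) (hV : V = ∑ x, P x * (Real.logb 2 (P x / Q x) - D)^2)
    (Dα : ℝ → ℝ)
    (hDα : ∀ α : ℝ, Dα α =
      (1/(α-1)) * Real.logb 2 (∑ x, Real.rpow (P x) α * Real.rpow (Q x) (1-α)))
    (α μ : ℝ) (hα : 1 < α) (hμ : μ ∈ Set.Ioo (0:ℝ) 1) :
    Dα α ≤ D + ((α-1) * Real.log 2 / 2) * V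
      + (α-1)^2 * ((1/(6 * μ^3 * Real.log 2))
          * (2:ℝ) ^ ((α-1) * (Dα α - D))
          * (Real.log ((2:ℝ) ^ ((α+μ-1) * (Dα (α+μ) - D)) + Real.exp 2))^3) :=
  stmt7_general P Q hP0 hP1 hsupp D hD V hV Dα hDα α μ hα hμ
end

section
/- Bound on the cubed-logarithm moment: let Z be a positive random variable on a finite probability space with E[Z] = 1. Then for any μ ∈ (0,1] and γ > 0, E[Z^γ ln³ Z] ≤ (1/μ³)·E[Z^γ]·ln³(E[Z^{γ+μ}]/E[Z^γ] + e²). -/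
/-!
Since `μ ln Z = ln Z^μ ≤ ln (Z^μ + e²)` and cubing is monotone, `ln³ Z ≤ μ⁻³ ln³ (Z^μ + e²)`.
On `[0, ∞)` the map `t ↦ ln³ (t + e²)` is concave (its second derivative is
`3 L (2 - L) / (t + e²)²` with `L = ln (t + e²) ≥ 2`), so Jensen's inequality for the weights
`w Z^γ` bounds `E[Z^γ ln³ (Z^μ + e²)]` by `E[Z^γ] ln³ (E[Z^{γ+μ}] / E[Z^γ] + e²)`.
-/

open Finset Real

lemma hasDerivAt_log_pow_three {x : ℝ} (hx : x ≠ 0) :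
    HasDerivAt (fun u => log u ^ 3) (3 * log x ^ 2 / x) x := by
  refine ((hasDerivAt_log hx).fun_pow 3).congr_deriv ?_
  push_cast
  ring

lemma hasDerivAt_three_mul_log_sq_div {x : ℝ} (hx : x ≠ 0) :
    HasDerivAt (fun u => 3 * log u ^ 2 / u) (3 * log x * (2 - log x) / x ^ 2) x := by
  refine ((((hasDerivAt_log hx).fun_pow 2).const_mul 3).fun_div (hasDerivAt_id' x) hx)
    |>.congr_deriv ?_
  field_simp
  ring

lemma concaveOn_log_pow_three : ConcaveOn ℝ (Set.Ici (exp 2)) (fun u => log u ^ 3) := by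
  have hx0 : ∀ x ∈ interior (Set.Ici (exp 2)), x ≠ 0 := fun x hx =>
    ((exp_pos 2).trans (interior_Ici.subset hx)).ne'
  refine concaveOn_of_hasDerivWithinAt2_nonpos (convex_Ici _) ?_
    (fun x hx => (hasDerivAt_log_pow_three (hx0 x hx)).hasDerivWithinAt)
    (fun x hx => (hasDerivAt_three_mul_log_sq_div (hx0 x hx)).hasDerivWithinAt) ?_
  · exact ((continuousOn_log.mono fun x hx => ((exp_pos 2).trans_le hx).ne').pow 3)
  · intro x hx
    rw [interior_Ici] at hx
    have hlog : 2 ≤ log x := by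
      rw [le_log_iff_exp_le ((exp_pos 2).trans hx)]; exact hx.le
    have : 3 * log x * (2 - log x) ≤ 0 :=
      mul_nonpos_of_nonneg_of_nonpos (by linarith) (by linarith)
    exact div_nonpos_of_nonpos_of_nonneg this (sq_nonneg x)

lemma concaveOn_log_add_exp_two_pow_three :
    ConcaveOn ℝ (Set.Ici 0) (fun t => log (t + exp 2) ^ 3) := by
  have h := concaveOn_log_pow_three.translate_left (exp 2)
  have hpre : (fun z => exp 2 + z) ⁻¹' Set.Ici (exp 2) = Set.Ici 0 := by
    ext; simp
  rwa [hpre] at h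

-- At zero total mass both sides vanish, whatever the junk value `f (0 / 0)` is.
lemma ConcaveOn.sum_mul_le_sum_mul_map_div {ι : Type*} {t : Finset ι} {s : Set ℝ}
    {f : ℝ → ℝ} (hf : ConcaveOn ℝ s f) {w p : ι → ℝ} (hw : ∀ i ∈ t, 0 ≤ w i)
    (hp : ∀ i ∈ t, p i ∈ s) :
    ∑ i ∈ t, w i * f (p i) ≤ (∑ i ∈ t, w i) * f ((∑ i ∈ t, w i * p i) / ∑ i ∈ t, w i) := by
  rcases (sum_nonneg hw).eq_or_lt with hzero | hpos
  · have hw0 := (sum_eq_zero_iff_of_nonneg hw).mp hzero.symm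
    rw [← hzero, zero_mul, sum_eq_zero fun i hi => by rw [hw0 i hi, zero_mul]]
  · have h := hf.le_map_centerMass hw hpos hp
    simp only [centerMass, smul_eq_mul, Function.comp, ← div_eq_inv_mul] at h
    rwa [div_le_iff₀' hpos] at h

lemma log_pow_three_le_s9 {z μ c : ℝ} (hz : 0 < z) (hμ : 0 < μ) (hc : 0 ≤ c) :
    log z ^ 3 ≤ 1 / μ ^ 3 * log (z ^ μ + c) ^ 3 := by
  have hmul : μ * log z ≤ log (z ^ μ + c) := by
    rw [← log_rpow hz]
    exact log_le_log (rpow_pos_of_pos hz μ) (le_add_of_nonneg_right hc)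
  have hcube := (Odd.pow_le_pow (by decide : Odd 3)).mpr hmul
  rw [mul_pow] at hcube
  rw [one_div_mul_eq_div, le_div_iff₀' (by positivity)]
  exact hcube

theorem stmt9_general {Ω : Type*} [Fintype Ω] (w : Ω → ℝ) (Z : Ω → ℝ)
    (hw0 : ∀ ω, 0 ≤ w ω)
    (hZ : ∀ ω, 0 < Z ω)
    (μ γ : ℝ) (hμ : 0 < μ) :
    ∑ ω, w ω * Real.rpow (Z ω) γ * (Real.log (Z ω))^3
      ≤ (1 / μ^3) * (∑ ω, w ω * Real.rpow (Z ω) γ)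
        * (Real.log ((∑ ω, w ω * Real.rpow (Z ω) (γ + μ))
            / (∑ ω, w ω * Real.rpow (Z ω) γ) + Real.exp 2))^3 := by
  simp only [rpow_eq_pow]
  have hv : ∀ ω ∈ univ, 0 ≤ w ω * Z ω ^ γ := fun ω _ =>
    mul_nonneg (hw0 ω) (rpow_pos_of_pos (hZ ω) γ).le
  have hmoment : ∑ ω, w ω * Z ω ^ (γ + μ) = ∑ ω, w ω * Z ω ^ γ * Z ω ^ μ := by
    simp only [rpow_add (hZ _), mul_assoc]
  have jensen := concaveOn_log_add_exp_two_pow_three.sum_mul_le_sum_mul_map_div hv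
    (p := fun ω => Z ω ^ μ) fun ω _ => (rpow_pos_of_pos (hZ ω) μ).le
  calc ∑ ω, w ω * Z ω ^ γ * log (Z ω) ^ 3
      ≤ ∑ ω, w ω * Z ω ^ γ * (1 / μ ^ 3 * log (Z ω ^ μ + exp 2) ^ 3) :=
        sum_le_sum fun ω hω => mul_le_mul_of_nonneg_left
          (log_pow_three_le_s9 (hZ ω) hμ (exp_pos 2).le) (hv ω hω)
    _ = 1 / μ ^ 3 * ∑ ω, w ω * Z ω ^ γ * log (Z ω ^ μ + exp 2) ^ 3 := by
        rw [mul_sum]; exact sum_congr rfl fun ω _ => by ring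
    _ ≤ 1 / μ ^ 3 * ((∑ ω, w ω * Z ω ^ γ)
          * log ((∑ ω, w ω * Z ω ^ (γ + μ)) / (∑ ω, w ω * Z ω ^ γ) + exp 2) ^ 3) := by
        rw [hmoment]; gcongr
    _ = _ := (mul_assoc _ _ _).symm

/-- Bound on the cubed-logarithm moment of a positive random variable with mean 1. -/
theorem stmt9 {Ω : Type*} [Fintype Ω] (w : Ω → ℝ) (Z : Ω → ℝ)
    (hw0 : ∀ ω, 0 ≤ w ω) (hw1 : ∑ ω, w ω = 1)
    (hZ : ∀ ω, 0 < Z ω) (hEZ : ∑ ω, w ω * Z ω = 1)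
    (μ γ : ℝ) (hμ : 0 < μ) (hμ1 : μ ≤ 1) (hγ : 0 < γ) :
    ∑ ω, w ω * Real.rpow (Z ω) γ * (Real.log (Z ω))^3
      ≤ (1 / μ^3) * (∑ ω, w ω * Real.rpow (Z ω) γ)
        * (Real.log ((∑ ω, w ω * Real.rpow (Z ω) (γ + μ))
            / (∑ ω, w ω * Real.rpow (Z ω) γ) + Real.exp 2))^3 :=
  stmt9_general w Z hw0 hZ μ γ hμ
end

section
/- Variance of the near-uniform distribution used as entropy price: let k ≥ 1 be an integer and let τ be a probability distribution on {1,…,k+1} with τ(j) = p for j ∈ {1,…,k} and τ(k+1) = p′ = 1 − kp, where 0 ≤ p′ ≤ p. Then the entropy variance V(τ) = Σ_j τ(j)(−log τ(j) − H(τ))² satisfies V(τ) = p′(1−p′)·log²(p/p′) ≤ 2, where H(τ) = −Σ_j τ(j) log τ(j). -/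
open Finset Real

private lemma stmt12_bound (p p' : ℝ) (hp : 0 < p) (hp' : 0 < p') (hp'p : p' ≤ p)
    (hple : p ≤ 1) (h0 : 0 ≤ 1 - p') :
    p' * (1 - p') * (Real.logb 2 p - Real.logb 2 p')^2 ≤ 2 := by
  have ht0 : 0 < p / p' := by positivity
  have ht1 : (1:ℝ) ≤ p / p' := (one_le_div hp').mpr hp'p
  have hlogb : Real.logb 2 p - Real.logb 2 p' = Real.log (p / p') / Real.log 2 := by
    rw [Real.logb, Real.logb, Real.log_div hp.ne' hp'.ne']
    ring
  set t := p / p' with htdef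
  have hpt : p' * t = p := by rw [htdef]; field_simp
  have hs : 0 < Real.sqrt t := Real.sqrt_pos.mpr ht0
  have hsq : Real.sqrt t ^ 2 = t := Real.sq_sqrt ht0.le
  have he : 0 < Real.exp 1 := Real.exp_pos 1
  have hls : Real.log (Real.sqrt t) * Real.exp 1 ≤ Real.sqrt t := by
    have h := Real.add_one_le_exp (Real.log (Real.sqrt t) - 1)
    rw [Real.exp_sub, Real.exp_log hs] at h
    exact (le_div_iff₀ he).mp (by linarith)
  have hlt : Real.log t = 2 * Real.log (Real.sqrt t) := by
    rw [Real.log_sqrt ht0.le]; ring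
  have hlog0 : 0 ≤ Real.log t := Real.log_nonneg ht1
  have h2 : Real.log t * Real.exp 1 ≤ 2 * Real.sqrt t := by
    rw [hlt]; linarith
  have h3 : 0 ≤ Real.log t * Real.exp 1 := mul_nonneg hlog0 he.le
  have hE2 : (Real.log t)^2 * (Real.exp 1)^2 ≤ 4 * t := by
    nlinarith [h2, h3, hsq]
  have hl2 : (0.6931471803 : ℝ) < Real.log 2 := Real.log_two_gt_d9
  have he9 : (2.7182818283 : ℝ) < Real.exp 1 := Real.exp_one_gt_d9
  have h4 : p' * (1 - p') * (Real.log t)^2 * (Real.exp 1)^2 ≤ 4 * p := by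
    have step := mul_le_mul_of_nonneg_left hE2 (mul_nonneg hp'.le h0)
    nlinarith [mul_nonneg hp'.le ht0.le, hpt, ht0.le]
  have hE2lb : (7.38:ℝ) < (Real.exp 1)^2 := by nlinarith [he9]
  have hl2lb : (0.48:ℝ) < (Real.log 2)^2 := by nlinarith [hl2]
  have main : p' * (1 - p') * (Real.log t)^2 ≤ 2 * (Real.log 2)^2 := by
    nlinarith [h4, hE2lb, hl2lb, hple,
      mul_nonneg (mul_nonneg hp'.le h0) (sq_nonneg (Real.log t))]
  rw [hlogb]
  have heq : p' * (1 - p') * (Real.log t / Real.log 2)^2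
      = (p' * (1 - p') * (Real.log t)^2) / (Real.log 2)^2 := by ring
  rw [heq, div_le_iff₀ (by positivity)]
  linarith [main]

/-- Entropy variance of the near-uniform "entropy price" distribution:
`τ(j) = p` for `j < k` and `τ(k) = p′ = 1 - kp` with `0 ≤ p′ ≤ p`. -/
theorem stmt12 (k : ℕ) (hk : 1 ≤ k) (p p' : ℝ)
    (hp : 0 < p) (hp'0 : 0 ≤ p') (hp'p : p' ≤ p) (hnorm : k * p + p' = 1)
    (τ : Fin (k+1) → ℝ) (hτ : ∀ j : Fin (k+1), τ j = if (j : ℕ) < k then p else p')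
    (H : ℝ) (hH : H = -∑ j, τ j * Real.logb 2 (τ j))
    (V : ℝ) (hV : V = ∑ j, τ j * (-Real.logb 2 (τ j) - H)^2) :
    V = p' * (1 - p') * (Real.logb 2 (p / p'))^2 ∧ V ≤ 2 := by
  have hsum : ∀ f : ℝ → ℝ, (∑ j, τ j * f (τ j)) = k * (p * f p) + p' * f p' := by
    intro f
    rw [Fin.sum_univ_castSucc]
    have h2 : τ (Fin.last k) = p' := by rw [hτ]; simp
    have h1 : ∀ j : Fin k, τ j.castSucc * f (τ j.castSucc) = p * f p := by
      intro j
      have : τ j.castSucc = p := by rw [hτ]; simp [j.isLt]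
      rw [this]
    rw [h2, Finset.sum_congr rfl (fun j _ => h1 j), Finset.sum_const]
    simp [nsmul_eq_mul]
  have hHval : H = -((k : ℝ) * (p * Real.logb 2 p) + p' * Real.logb 2 p') := by
    rw [hH, hsum (Real.logb 2)]
  have hVval : V = (k : ℝ) * (p * (-Real.logb 2 p - H)^2)
      + p' * (-Real.logb 2 p' - H)^2 := by
    rw [hV, hsum (fun x => (-Real.logb 2 x - H)^2)]
  have hkr : (k : ℝ) = (1 - p') / p := by
    field_simp
    linarith
  have hkey : V = p' * (1 - p') * (Real.logb 2 p - Real.logb 2 p')^2 := by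
    rw [hVval, hHval, hkr]
    field_simp
    ring
  have hk1 : (1 : ℝ) ≤ (k : ℝ) := by exact_mod_cast hk
  have hple : p ≤ 1 := by nlinarith
  rcases eq_or_lt_of_le hp'0 with h0 | hp'pos
  · constructor
    · rw [hkey, ← h0]; ring
    · rw [hkey, ← h0]
      norm_num
  · have hdiv : Real.logb 2 (p / p') = Real.logb 2 p - Real.logb 2 p' :=
      Real.logb_div hp.ne' hp'pos.ne'
    constructor
    · rw [hkey, hdiv]
    · rw [hkey]
      exact stmt12_bound p p' hp hp'pos hp'p hple (by linarith)
end

section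
/- Variance bound for the infrequent-sampling tradeoff function: with the setup of the previous construction (𝒳 = 𝒳′ ∪ {⊥}, γ ∈ (0,1], g affine on 𝒫(𝒳′), and f defined by f(δ_x) = Max(g) + (1/γ)(g(δ_x) − Max(g)) for x ∈ 𝒳′ and f(δ_⊥) = Max(g)): for every q ∈ 𝒫(𝒳) of the form q(x) = γ q′(x) on 𝒳′ and q(⊥) = 1−γ with q′ ∈ 𝒫(𝒳′), one has Σ_{x∈𝒳} q(x) f(δ_x)² − (Σ_{x∈𝒳} q(x) f(δ_x))² ≤ (1/γ)·(Max(g) − Min(g))², where Max(g) = max_{x∈𝒳′} g(δ_x) and Min(g) = min_{x∈𝒳′} g(δ_x). -/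
/-!
Measuring the deviations of `f` from `Max(g)` instead of from its mean can only increase the
second moment. These deviations vanish at `⊥` and equal `(g x - Max(g)) / γ` on `𝒳′`, so the
weight `γ q′(x)` leaves `(1/γ) ∑ q′(x) (g x - Max(g))²`, and each `(g x - Max(g))²` is at most
`(Max(g) - Min(g))²`.
-/

open Finset

section WeightedSums

variable {ι α : Type*} [CommRing α] [LinearOrder α] [IsStrictOrderedRing α]

theorem sum_mul_sq_sub_sq_sum_le_sum_mul_sq_sub (s : Finset ι) (p f : ι → α)
    (hp : ∑ i ∈ s, p i = 1) (c : α) :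
    ∑ i ∈ s, p i * f i ^ 2 - (∑ i ∈ s, p i * f i) ^ 2 ≤ ∑ i ∈ s, p i * (f i - c) ^ 2 := by
  have hexpand : ∑ i ∈ s, p i * (f i - c) ^ 2
      = ∑ i ∈ s, p i * f i ^ 2 - 2 * c * ∑ i ∈ s, p i * f i + c ^ 2 := by
    rw [sum_congr rfl fun i _ => show p i * (f i - c) ^ 2
        = p i * f i ^ 2 - 2 * c * (p i * f i) + c ^ 2 * p i by ring]
    rw [sum_add_distrib, sum_sub_distrib, ← mul_sum, ← mul_sum, hp, mul_one]
  -- the gap between the two sides is `(∑ p f - c)²`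
  nlinarith [sq_nonneg (∑ i ∈ s, p i * f i - c)]

theorem sum_mul_le_of_le_of_sum_eq_one (s : Finset ι) {p a : ι → α} {B : α}
    (hp0 : ∀ i ∈ s, 0 ≤ p i) (hp1 : ∑ i ∈ s, p i = 1) (ha : ∀ i ∈ s, a i ≤ B) :
    ∑ i ∈ s, p i * a i ≤ B :=
  calc ∑ i ∈ s, p i * a i ≤ ∑ i ∈ s, p i * B :=
        sum_le_sum fun i hi => mul_le_mul_of_nonneg_left (ha i hi) (hp0 i hi)
    _ = B := by rw [← sum_mul, hp1, one_mul]

theorem sq_sub_sup'_le_sq_sup'_sub_inf' {s : Finset ι} (hs : s.Nonempty) (g : ι → α)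
    {i : ι} (hi : i ∈ s) : (g i - s.sup' hs g) ^ 2 ≤ (s.sup' hs g - s.inf' hs g) ^ 2 := by
  have hle_sup := le_sup' g hi
  have hinf_le := inf'_le g hi
  exact sq_le_sq' (by linarith) (by linarith)

end WeightedSums

theorem stmt17_general {X' : Type*} [Fintype X'] [Nonempty X']
    (γ : ℝ) (hγ0 : 0 < γ)
    (g : X' → ℝ)
    (M : ℝ) (hM : M = Finset.univ.sup' Finset.univ_nonempty g)
    (m : ℝ) (hm : m = Finset.univ.inf' Finset.univ_nonempty g)
    (f : Option X' → ℝ)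
    (hf : ∀ x : X', f (some x) = M + (1/γ) * (g x - M))
    (hfbot : f none = M)
    (q' : X' → ℝ) (hq'0 : ∀ x, 0 ≤ q' x) (hq'1 : ∑ x, q' x = 1) :
    (∑ z : Option X', (z.elim (1-γ) (fun x => γ * q' x)) * (f z)^2)
      - (∑ z : Option X', (z.elim (1-γ) (fun x => γ * q' x)) * f z)^2
      ≤ (1/γ) * (M - m)^2 := by
  set q : Option X' → ℝ := fun z => z.elim (1 - γ) (fun x => γ * q' x)
  have hq : ∑ z, q z = 1 := by
    simp only [q, Fintype.sum_option, Option.elim_none, Option.elim_some, ← mul_sum, hq'1]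
    ring
  have hdev : ∑ z, q z * (f z - M) ^ 2 = (1 / γ) * ∑ x, q' x * (g x - M) ^ 2 := by
    simp only [q, Fintype.sum_option, Option.elim_none, Option.elim_some, hfbot, hf,
      sub_self, add_sub_cancel_left, mul_sum]
    rw [zero_pow two_ne_zero, mul_zero, zero_add]
    exact sum_congr rfl fun x _ => by field_simp
  calc _ ≤ ∑ z, q z * (f z - M) ^ 2 := sum_mul_sq_sub_sq_sum_le_sum_mul_sq_sub _ q f hq M
    _ = (1 / γ) * ∑ x, q' x * (g x - M) ^ 2 := hdev
    _ ≤ (1 / γ) * (M - m) ^ 2 := by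
      gcongr
      refine sum_mul_le_of_le_of_sum_eq_one _ (fun x _ => hq'0 x) hq'1 fun x hx => ?_
      subst hM hm
      exact sq_sub_sup'_le_sq_sup'_sub_inf' _ g hx

/-- Variance bound for the infrequent-sampling tradeoff function. -/
theorem stmt17 {X' : Type*} [Fintype X'] [Nonempty X']
    (γ : ℝ) (hγ0 : 0 < γ) (hγ1 : γ ≤ 1)
    (g : X' → ℝ)
    (M : ℝ) (hM : M = Finset.univ.sup' Finset.univ_nonempty g)
    (m : ℝ) (hm : m = Finset.univ.inf' Finset.univ_nonempty g)
    (f : Option X' → ℝ)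
    (hf : ∀ x : X', f (some x) = M + (1/γ) * (g x - M))
    (hfbot : f none = M)
    (q' : X' → ℝ) (hq'0 : ∀ x, 0 ≤ q' x) (hq'1 : ∑ x, q' x = 1) :
    (∑ z : Option X', (z.elim (1-γ) (fun x => γ * q' x)) * (f z)^2)
      - (∑ z : Option X', (z.elim (1-γ) (fun x => γ * q' x)) * f z)^2
      ≤ (1/γ) * (M - m)^2 :=
  stmt17_general γ hγ0 g M hM m hm f hf hfbot q' hq'0 hq'1
end
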